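/- Let d, m ≥ 1, L > 0, r ≥ 0, 0 ≤ ρ ≤ r, 0 < ϑ ≤ 1/2, and suppose f : ℝ^d → ℝ^d satisfies |f(x)| ≤ L(1+|x|^{2r+1}) and g : ℝ^d → ℝ^{d×m} satisfies ‖g(x)‖ ≤ L(1+|x|^ρ) for all x ∈ ℝ^d. Then there exists a constant C depending only on L, r and ρ such that for all h > 0 and all x ∈ ℝ^d, the fully tamed Euler (FTE2) coefficients satisfy |f̄_h(x) − f(x)| ≤ C h^{ϑ}(1+|x|^{4r+1}) and ‖ḡ_h(x) − g(x)‖ ≤ C h^{ϑ}(1+|x|^{2r+ρ}). -/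

import Mathlib

/-!
Write `t = h^ϑ |x|^{2r}`. Taming multiplies by `(1 + t)⁻¹`, which moves a vector by at most
`t` times its length. With the growth bound `L (1 + |x|^b)` on `f` or `g`, the error is at most
`L h^ϑ |x|^{2r} (1 + |x|^b)`, and `|x|^a (1 + |x|^b) ≤ 2 (1 + |x|^{a+b})` gives the claimed
weights, with `C = 2L`.
-/

open Real

lemma norm_inv_one_add_smul_sub_le {E : Type*} [NormedAddCommGroup E] [NormedSpace ℝ E]
    {t : ℝ} (ht : 0 ≤ t) (v : E) : ‖(1 + t)⁻¹ • v - v‖ ≤ t * ‖v‖ := by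
  have hpos : 0 < 1 + t := by linarith
  have hcoef : (1 + t)⁻¹ - 1 = -(t / (1 + t)) := by field_simp; ring
  have hdiff : (1 + t)⁻¹ • v - v = -(t / (1 + t)) • v := by rw [← hcoef, sub_smul, one_smul]
  rw [hdiff, norm_smul, norm_neg, norm_div, Real.norm_of_nonneg ht,
    Real.norm_of_nonneg hpos.le]
  gcongr
  exact div_le_self ht (by linarith)

lemma rpow_le_one_add_rpow {s a b : ℝ} (hs : 0 ≤ s) (ha : 0 ≤ a) (hab : a ≤ b) :
    s ^ a ≤ 1 + s ^ b := by
  rcases le_or_gt s 1 with hs1 | hs1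
  · linarith [rpow_le_one hs hs1 ha, rpow_nonneg hs b]
  · linarith [rpow_le_rpow_of_exponent_le hs1.le hab]

lemma rpow_mul_one_add_rpow_le {s a b : ℝ} (hs : 0 ≤ s) (ha : 0 ≤ a) (hb : 0 ≤ b) :
    s ^ a * (1 + s ^ b) ≤ 2 * (1 + s ^ (a + b)) := by
  have hfirst : s ^ a ≤ 1 + s ^ (a + b) := rpow_le_one_add_rpow hs ha (by linarith)
  have hprod : s ^ a * s ^ b = s ^ (a + b) := (rpow_add_of_nonneg hs ha hb).symm
  linarith [mul_one_add (s ^ a) (s ^ b)]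

lemma norm_tamed_sub_le {E : Type*} [NormedAddCommGroup E] [NormedSpace ℝ E]
    {k s a b L : ℝ} (hk : 0 ≤ k) (hs : 0 ≤ s) (ha : 0 ≤ a) (hb : 0 ≤ b) {v : E}
    (hv : ‖v‖ ≤ L * (1 + s ^ b)) :
    ‖(1 + k * s ^ a)⁻¹ • v - v‖ ≤ 2 * L * k * (1 + s ^ (a + b)) := by
  have hL : 0 ≤ L :=
    nonneg_of_mul_nonneg_left ((norm_nonneg v).trans hv) (by positivity)
  calc ‖(1 + k * s ^ a)⁻¹ • v - v‖
      ≤ k * s ^ a * ‖v‖ := norm_inv_one_add_smul_sub_le (by positivity) v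
    _ ≤ k * s ^ a * (L * (1 + s ^ b)) := by gcongr
    _ = k * L * (s ^ a * (1 + s ^ b)) := by ring
    _ ≤ k * L * (2 * (1 + s ^ (a + b))) :=
        mul_le_mul_of_nonneg_left (rpow_mul_one_add_rpow_le hs ha hb) (by positivity)
    _ = 2 * L * k * (1 + s ^ (a + b)) := by ring

theorem fte2_modification_error_general
    (L r ρ ϑ : ℝ) (hL : 0 < L) (hr : 0 ≤ r) (hρ0 : 0 ≤ ρ) :
    ∃ C : ℝ, 0 < C ∧ ∀ (d m : ℕ), 1 ≤ d → 1 ≤ m →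
      ∀ (f : EuclideanSpace ℝ (Fin d) → EuclideanSpace ℝ (Fin d))
        (g : EuclideanSpace ℝ (Fin d) → EuclideanSpace ℝ (Fin d × Fin m)),
      (∀ x, ‖f x‖ ≤ L * (1 + ‖x‖ ^ (2 * r + 1))) →
      (∀ x, ‖g x‖ ≤ L * (1 + ‖x‖ ^ ρ)) →
      ∀ h : ℝ, 0 < h → ∀ x : EuclideanSpace ℝ (Fin d),
        ‖(1 + h ^ ϑ * ‖x‖ ^ (2 * r))⁻¹ • f x - f x‖
            ≤ C * h ^ ϑ * (1 + ‖x‖ ^ (4 * r + 1)) ∧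
        ‖(1 + h ^ ϑ * ‖x‖ ^ (2 * r))⁻¹ • g x - g x‖
            ≤ C * h ^ ϑ * (1 + ‖x‖ ^ (2 * r + ρ)) := by
  refine ⟨2 * L, by positivity, fun d m _ _ f g hf hg h hh x => ⟨?_, ?_⟩⟩
  · have hexp : 2 * r + (2 * r + 1) = 4 * r + 1 := by ring
    simpa only [hexp] using norm_tamed_sub_le (a := 2 * r) (rpow_nonneg hh.le ϑ) (norm_nonneg x)
      (by positivity) (by positivity) (hf x)
  · exact norm_tamed_sub_le (rpow_nonneg hh.le ϑ) (norm_nonneg x)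
      (by positivity) hρ0 (hg x)

/-- Modification-error bounds for the fully tamed Euler (FTE2) scheme: the tamed
coefficients `f̄_h(x) = f(x)/(1+h^ϑ|x|^{2r})`, `ḡ_h(x) = g(x)/(1+h^ϑ|x|^{2r})`
differ from `f`, `g` by `O(h^ϑ)` with polynomial weights.
`ℝ^{d×m}` is modelled as `EuclideanSpace ℝ (Fin d × Fin m)` (Frobenius norm). -/
theorem fte2_modification_error
    (L r ρ ϑ : ℝ) (hL : 0 < L) (hr : 0 ≤ r) (hρ0 : 0 ≤ ρ) (hρr : ρ ≤ r)
    (hϑ : 0 < ϑ) (hϑ' : ϑ ≤ 1 / 2) :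
    ∃ C : ℝ, 0 < C ∧ ∀ (d m : ℕ), 1 ≤ d → 1 ≤ m →
      ∀ (f : EuclideanSpace ℝ (Fin d) → EuclideanSpace ℝ (Fin d))
        (g : EuclideanSpace ℝ (Fin d) → EuclideanSpace ℝ (Fin d × Fin m)),
      (∀ x, ‖f x‖ ≤ L * (1 + ‖x‖ ^ (2 * r + 1))) →
      (∀ x, ‖g x‖ ≤ L * (1 + ‖x‖ ^ ρ)) →
      ∀ h : ℝ, 0 < h → ∀ x : EuclideanSpace ℝ (Fin d),
        ‖(1 + h ^ ϑ * ‖x‖ ^ (2 * r))⁻¹ • f x - f x‖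
            ≤ C * h ^ ϑ * (1 + ‖x‖ ^ (4 * r + 1)) ∧
        ‖(1 + h ^ ϑ * ‖x‖ ^ (2 * r))⁻¹ • g x - g x‖
            ≤ C * h ^ ϑ * (1 + ‖x‖ ^ (2 * r + ρ)) :=
  fte2_modification_error_general L r ρ ϑ hL hr hρ0
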